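/- Let φ(x) = (1 + 1/x²)/(x(1 − 1/x⁴)) and R1(x) = √|1 − φ(x)²| − φ(x). If there exists β* ≥ 2 with R1(β*) > 1/β* and φ(β*) < 1, then for all x ≥ β* we have R1(x) > 1/x. -/
import Mathlib


theorem stmt_9 (φ R1 : ℝ → ℝ)
    (hφ : ∀ x, φ x = (1 + 1 / x ^ 2) / (x * (1 - 1 / x ^ 4)))
    (hR1 : ∀ x, R1 x = Real.sqrt |1 - φ x ^ 2| - φ x)
    (βs : ℝ) (hβs : 2 ≤ βs) (h1 : R1 βs > 1 / βs) (h2 : φ βs < 1) :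
    ∀ x, βs ≤ x → R1 x > 1 / x := by
  intro x hx
  have hβ1 : (1:ℝ) < βs := by linarith
  have hx1 : (1:ℝ) < x := by linarith
  have key : ∀ y : ℝ, 1 < y → φ y = y / (y ^ 2 - 1) := by
    intro y hy
    have hy0 : y ≠ 0 := by linarith
    have h2' : y ^ 2 - 1 ≠ 0 := by nlinarith
    have hy2 : (0:ℝ) < y ^ 2 - 1 := by nlinarith
    have hlt : 1 / y ^ 4 < 1 := by
      rw [div_lt_one (by positivity)]; nlinarith
    have hden : y * (1 - 1 / y ^ 4) ≠ 0 :=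
      mul_ne_zero hy0 (ne_of_gt (by linarith))
    rw [hφ, div_eq_div_iff hden (ne_of_gt hy2)]
    field_simp
    ring
  have hφx := key x hx1
  have hφβ := key βs hβ1
  have hpx : 0 < φ x := by
    rw [hφx]; apply div_pos (by linarith); nlinarith
  have hpβ : 0 < φ βs := by
    rw [hφβ]; apply div_pos (by linarith); nlinarith
  have hmono : φ x ≤ φ βs := by
    rw [hφx, hφβ, div_le_div_iff₀ (by nlinarith) (by nlinarith)]
    nlinarith [mul_nonneg (sub_nonneg.2 hx) (show (0:ℝ) ≤ x * βs + 1 by nlinarith)]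
  have hφx1 : φ x < 1 := lt_of_le_of_lt hmono h2
  have habsx : |1 - φ x ^ 2| = 1 - φ x ^ 2 := abs_of_nonneg (by nlinarith)
  have habsβ : |1 - φ βs ^ 2| = 1 - φ βs ^ 2 := abs_of_nonneg (by nlinarith)
  have hs : Real.sqrt (1 - φ βs ^ 2) ≤ Real.sqrt (1 - φ x ^ 2) :=
    Real.sqrt_le_sqrt (by nlinarith)
  have hinv : 1 / x ≤ 1 / βs := one_div_le_one_div_of_le (by linarith) hx
  rw [hR1, habsβ] at h1
  rw [hR1, habsx]
  linarith
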